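/- arXiv:math/9809145 — 5 statements merged into one kernel-verified Lean document; each statement's English description precedes it below -/
import Mathlib

section
/- Let r, R, r̃₁, r̃₂, B be real numbers with 0 < r < R, 0 < r̃₁ ≤ r̃₂, 0 < B < 2·r̃₂, and suppose the cross-ratio identity (2r)(2R)/(R + r)² = (2r̃₁)(2r̃₂)/((2r̃₁ + B)(2r̃₂ − B)) holds. Then r̃₁/(r̃₁ + B) ≤ 4r/R. -/
/-- Case (1) of the proof of Lemma 3.1: the cross-ratio identity for a spherical
shell not containing the origin implies `r̃₁/(r̃₁ + B) ≤ 4 r / R`. -/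
theorem stmt_1 (r R r₁ r₂ B : ℝ)
    (hr : 0 < r) (hrR : r < R)
    (hr₁ : 0 < r₁) (hr₁₂ : r₁ ≤ r₂)
    (hB : 0 < B) (hB₂ : B < 2 * r₂)
    (hcross : (2 * r) * (2 * R) / (R + r) ^ 2
      = (2 * r₁) * (2 * r₂) / ((2 * r₁ + B) * (2 * r₂ - B))) :
    r₁ / (r₁ + B) ≤ 4 * r / R := by
  have hR : 0 < R := hr.trans hrR
  have hd1 : 0 < (2 * r₁ + B) * (2 * r₂ - B) := by
    apply mul_pos <;> nlinarith
  have hd2 : 0 < r₁ + B := by linarith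
  have step1 : r₁ / (r₁ + B) ≤ (2 * r₁) * (2 * r₂) / ((2 * r₁ + B) * (2 * r₂ - B)) := by
    rw [div_le_div_iff₀ hd2 hd1]
    nlinarith [mul_pos hr₁ hB, mul_pos hB hB, mul_pos (hr₁.trans_le hr₁₂) hB]
  rw [← hcross] at step1
  refine step1.trans ?_
  rw [div_le_div_iff₀ (by positivity) hR]
  nlinarith [sq_nonneg (R - r), mul_pos hr hR, mul_pos hr hr]
end

section
/- Let r, R, r̃₁, r̃₂, B be real numbers with 0 < r < R, 0 < r̃₁ ≤ r̃₂, 0 < B, and suppose the cross-ratio identity (2r)(2R)/(R + r)² = (2r̃₁)(2r̃₂)/((2r̃₁ + B)(2r̃₂ + B)) holds. Then (r̃₁/(r̃₁ + B/2))² ≤ 4r/R. -/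
/-- Case (2) of the proof of Lemma 3.1: the cross-ratio identity for a spherical
shell containing the origin implies `(r̃₁/(r̃₁ + B/2))² ≤ 4 r / R`. -/
theorem stmt_2 (r R r₁ r₂ B : ℝ)
    (hr : 0 < r) (hrR : r < R)
    (hr₁ : 0 < r₁) (hr₁₂ : r₁ ≤ r₂)
    (hB : 0 < B)
    (hcross : (2 * r) * (2 * R) / (R + r) ^ 2
      = (2 * r₁) * (2 * r₂) / ((2 * r₁ + B) * (2 * r₂ + B))) :
    (r₁ / (r₁ + B / 2)) ^ 2 ≤ 4 * r / R := by
  have hR : 0 < R := hr.trans hrR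
  have h1 : 0 < 2 * r₁ + B := by linarith
  have h2 : 0 < 2 * r₂ + B := by linarith
  have key : (r₁ / (r₁ + B / 2)) ^ 2
      ≤ (2 * r₁) * (2 * r₂) / ((2 * r₁ + B) * (2 * r₂ + B)) := by
    rw [div_pow, div_le_div_iff₀ (by positivity) (by positivity)]
    nlinarith [mul_nonneg (mul_nonneg hr₁.le hB.le) (sub_nonneg.2 hr₁₂),
      mul_pos hr₁ hB, mul_pos h1 h2]
  have key2 : (2 * r) * (2 * R) / (R + r) ^ 2 ≤ 4 * r / R := by
    rw [div_le_div_iff₀ (by positivity) hR]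
    nlinarith [sq_nonneg r, mul_pos hr hR]
  calc (r₁ / (r₁ + B / 2)) ^ 2 ≤ (2 * r₁) * (2 * r₂) / ((2 * r₁ + B) * (2 * r₂ + B)) := key
    _ = (2 * r) * (2 * R) / (R + r) ^ 2 := hcross.symm
    _ ≤ 4 * r / R := key2
end

section
/- Let x, y, w be three affinely independent points in the Euclidean plane ℝ², let z be their circumcenter (the unique point with dist(z,x) = dist(z,y) = dist(z,w)), and let p > 0. If dist(x,w) ≥ 2p, dist(y,w) ≥ 2p, and dist(x,w) ≥ dist(x,y), then the Euclidean distance from z to the line through x and y is at least p/2. -/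
/-!
Let `x'` be the antipode of `x` on the circle through `x, y, w` centred at `z`, and `m` the
midpoint of `xy`, which is the foot of the perpendicular from `z` to the line `xy`. By Thales,
`|wx'|² = 4R² - |xw|² ≤ 4R² - |xy|² = |yx'|²`, and `|yx'| = 2|zm|` since `zm` is a midline of the
triangle `xyx'`. Hence `|yw| ≤ |yx'| + |x'w| ≤ 4|zm|`, and `|yw| ≥ 2p` gives `|zm| ≥ p/2`.
-/

open EuclideanGeometry AffineSubspace

section

variable {V P : Type*} [NormedAddCommGroup V] [InnerProductSpace ℝ V] [MetricSpace P]
  [NormedAddTorsor V P]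

theorem infDist_affineSpan_pair_eq_dist_midpoint {x y z : P} (h : dist z x = dist z y) :
    Metric.infDist z (line[ℝ, x, y] : Set P) = dist z (midpoint ℝ x y) := by
  have hz : z ∈ perpBisector y x := mem_perpBisector_iff_dist_eq.2 h.symm
  rw [← dist_orthogonalProjection_eq_infDist]
  congr 2
  rw [coe_orthogonalProjection_eq_iff_mem, direction_affineSpan, vectorSpan_pair,
    Submodule.mem_orthogonal_singleton_iff_inner_right]
  exact ⟨AffineMap.lineMap_mem_affineSpan_pair _ _ _,
    midpoint_comm (R := ℝ) x y ▸ mem_perpBisector_iff_inner_eq_zero'.1 hz⟩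

theorem dist_sq_add_dist_pointReflection_sq {x z q : P} (h : dist z q = dist z x) :
    dist x q ^ 2 + dist q (Equiv.pointReflection z x) ^ 2 = 4 * dist z x ^ 2 := by
  have := dist_sq_add_dist_sq_eq_two_mul_dist_midpoint_sq_add_half_dist_sq q x
    (Equiv.pointReflection z x)
  rw [midpoint_pointReflection_right, dist_comm q z, h, dist_right_pointReflection ℝ,
    dist_comm q x] at this
  rw [this, Real.norm_two]
  ring

theorem dist_le_four_mul_dist_midpoint {x y w z : P} (hzx : dist z x = dist z y)
    (hzw : dist z x = dist z w) (hxy : dist x y ≤ dist x w) :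
    dist y w ≤ 4 * dist z (midpoint ℝ x y) := by
  have hy := dist_sq_add_dist_pointReflection_sq hzx.symm
  have hw := dist_sq_add_dist_pointReflection_sq hzw.symm
  have hm := dist_sq_add_dist_sq_eq_two_mul_dist_midpoint_sq_add_half_dist_sq z x y
  rw [← hzx] at hm
  set x' := Equiv.pointReflection z x
  have hyx' : dist y x' = 2 * dist z (midpoint ℝ x y) :=
    (sq_eq_sq₀ dist_nonneg (by positivity)).1 (by linear_combination hy + 2 * hm)
  have hwx' : dist w x' ≤ dist y x' := by
    refine (pow_le_pow_iff_left₀ dist_nonneg dist_nonneg two_ne_zero).1 ?_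
    linarith [pow_le_pow_left₀ dist_nonneg hxy 2]
  calc dist y w ≤ dist y x' + dist w x' := dist_triangle_right _ _ _
    _ ≤ 2 * dist y x' := by linarith
    _ = 4 * dist z (midpoint ℝ x y) := by rw [hyx']; ring

end

theorem stmt_9_general (x y w z : EuclideanSpace ℝ (Fin 2)) (p : ℝ)
    (hzx : dist z x = dist z y) (hzw : dist z x = dist z w)
    (hyw : 2 * p ≤ dist y w)
    (hxwxy : dist x y ≤ dist x w) :
    p / 2 ≤ Metric.infDist z (affineSpan ℝ {x, y} : Set (EuclideanSpace ℝ (Fin 2))) := by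
  rw [infDist_affineSpan_pair_eq_dist_midpoint hzx]
  linarith [dist_le_four_mul_dist_midpoint hzx hzw hxwxy]

/-- Geometric core of Lemma 6.6: if `z` is the circumcenter of the triangle `xyw`,
the sides `xw` and `yw` have length at least `2p`, and `xw` is at least as long as
`xy`, then `z` is at distance at least `p/2` from the line through `x` and `y`. -/
theorem stmt_9 (x y w z : EuclideanSpace ℝ (Fin 2)) (p : ℝ) (hp : 0 < p)
    (hindep : AffineIndependent ℝ ![x, y, w])
    (hzx : dist z x = dist z y) (hzw : dist z x = dist z w)
    (hxw : 2 * p ≤ dist x w) (hyw : 2 * p ≤ dist y w)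
    (hxwxy : dist x y ≤ dist x w) :
    p / 2 ≤ Metric.infDist z (affineSpan ℝ {x, y} : Set (EuclideanSpace ℝ (Fin 2))) :=
  stmt_9_general x y w z p hzx hzw hyw hxwxy
end

section
/- Let x, y, w be three affinely independent points in the Euclidean plane ℝ², let z be their circumcenter, and let p > 0. If the angle of the triangle xyw at y is at least a right angle (i.e., the inner product ⟨x − y, w − y⟩ ≤ 0) and dist(y,w) ≥ 2p, then the Euclidean distance from z to the line through x and y is at least p. -/
/-!
Let `m` be the midpoint of `xy` and `R = |zx|`. Since `z` lies on the perpendicular bisector of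
`xy`, Pythagoras gives `|zq|² = |zm|² + |qm|²` for every `q` on the line `xy`, so the distance
from `z` to that line is `|zm|`, and `|zm|² = R² - |xy|²/4`. The obtuse angle at `y` gives
`|xw|² ≥ |xy|² + |yw|² ≥ |xy|² + 4p²`, while `|xw| ≤ 2R`; hence `|zm|² ≥ p²`.
-/

open RealInnerProductSpace

namespace EuclideanGeometry

variable {V P : Type*} [NormedAddCommGroup V] [InnerProductSpace ℝ V] [MetricSpace P]
  [NormedAddTorsor V P]

theorem dist_sq_eq_dist_midpoint_sq_add_of_mem_affineSpan_pair {x y z q : P}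
    (hz : dist z x = dist z y) (hq : q ∈ line[ℝ, x, y]) :
    dist z q ^ 2 = dist z (midpoint ℝ x y) ^ 2 + dist q (midpoint ℝ x y) ^ 2 := by
  set m := midpoint ℝ x y
  obtain ⟨r, hr⟩ : ∃ r : ℝ, r • (y -ᵥ x) = q -ᵥ m := by
    rw [← mem_vectorSpan_pair_rev, ← direction_affineSpan]
    exact AffineSubspace.vsub_mem_direction hq (AffineMap.lineMap_mem_affineSpan_pair _ _ _)
  have hperp : ⟪z -ᵥ m, y -ᵥ x⟫ = 0 :=
    inner_vsub_vsub_of_dist_eq_of_dist_eq (dist_left_midpoint_eq_dist_right_midpoint x y)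
      (by rw [dist_comm x, dist_comm y, hz])
  have hperp' : ⟪z -ᵥ m, q -ᵥ m⟫ = 0 := by
    rw [← hr, inner_smul_right, hperp, mul_zero]
  rw [dist_eq_norm_vsub V, dist_eq_norm_vsub V, dist_eq_norm_vsub V,
    ← vsub_sub_vsub_cancel_right z q m, sq, sq, sq,
    norm_sub_sq_eq_norm_sq_add_norm_sq_real hperp']

theorem dist_midpoint_le_of_mem_affineSpan_pair {x y z q : P}
    (hz : dist z x = dist z y) (hq : q ∈ line[ℝ, x, y]) :
    dist z (midpoint ℝ x y) ≤ dist z q := by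
  refine le_of_sq_le_sq ?_ dist_nonneg
  rw [dist_sq_eq_dist_midpoint_sq_add_of_mem_affineSpan_pair hz hq]
  exact le_add_of_nonneg_right (sq_nonneg _)

theorem dist_sq_eq_dist_midpoint_sq_add_dist_sq_div_four {x y z : P}
    (hz : dist z x = dist z y) :
    dist z x ^ 2 = dist z (midpoint ℝ x y) ^ 2 + dist x y ^ 2 / 4 := by
  rw [dist_sq_eq_dist_midpoint_sq_add_of_mem_affineSpan_pair hz (left_mem_affineSpan_pair _ _ _),
    dist_left_midpoint, Real.norm_two]
  ring

theorem dist_sq_add_dist_sq_le_of_inner_vsub_vsub_nonpos {x y w : P}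
    (h : ⟪x -ᵥ y, w -ᵥ y⟫ ≤ 0) : dist x y ^ 2 + dist y w ^ 2 ≤ dist x w ^ 2 := by
  rw [dist_eq_norm_vsub V, dist_comm y, dist_eq_norm_vsub V, dist_eq_norm_vsub V,
    ← vsub_sub_vsub_cancel_right x w y, norm_sub_sq_real]
  linarith

end EuclideanGeometry

theorem stmt_10_general (x y w z : EuclideanSpace ℝ (Fin 2)) (p : ℝ) (hp : 0 < p)
    (hzx : dist z x = dist z y) (hzw : dist z x = dist z w)
    (hangle : (inner ℝ (x - y) (w - y) : ℝ) ≤ 0)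
    (hyw : 2 * p ≤ dist y w) :
    p ≤ Metric.infDist z (affineSpan ℝ {x, y} : Set (EuclideanSpace ℝ (Fin 2))) := by
  rw [Metric.le_infDist ⟨x, left_mem_affineSpan_pair ℝ x y⟩]
  intro q hq
  refine le_trans ?_ (EuclideanGeometry.dist_midpoint_le_of_mem_affineSpan_pair hzx hq)
  have hdiam : dist x w ≤ 2 * dist z x := by
    linarith [dist_triangle x z w, dist_comm x z]
  have hobtuse : dist x y ^ 2 + dist y w ^ 2 ≤ dist x w ^ 2 :=
    EuclideanGeometry.dist_sq_add_dist_sq_le_of_inner_vsub_vsub_nonpos hangle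
  refine le_of_sq_le_sq ?_ dist_nonneg
  calc p ^ 2 = ((2 * p) ^ 2 + dist x y ^ 2) / 4 - dist x y ^ 2 / 4 := by ring
    _ ≤ (dist y w ^ 2 + dist x y ^ 2) / 4 - dist x y ^ 2 / 4 := by gcongr
    _ ≤ dist x w ^ 2 / 4 - dist x y ^ 2 / 4 := by linarith
    _ ≤ (2 * dist z x) ^ 2 / 4 - dist x y ^ 2 / 4 := by gcongr
    _ = dist z (midpoint ℝ x y) ^ 2 := by
      rw [mul_pow, EuclideanGeometry.dist_sq_eq_dist_midpoint_sq_add_dist_sq_div_four hzx]; ring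

/-- Obtuse-angle case in the proof of Lemma 6.6: if `z` is the circumcenter of the
triangle `xyw`, the angle at `y` is at least a right angle, and `yw` has length at
least `2p`, then `z` is at distance at least `p` from the line through `x` and `y`. -/
theorem stmt_10 (x y w z : EuclideanSpace ℝ (Fin 2)) (p : ℝ) (hp : 0 < p)
    (hindep : AffineIndependent ℝ ![x, y, w])
    (hzx : dist z x = dist z y) (hzw : dist z x = dist z w)
    (hangle : (inner ℝ (x - y) (w - y) : ℝ) ≤ 0)
    (hyw : 2 * p ≤ dist y w) :
    p ≤ Metric.infDist z (affineSpan ℝ {x, y} : Set (EuclideanSpace ℝ (Fin 2))) :=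
  stmt_10_general x y w z p hp hzx hzw hangle hyw
end

section
/- Let d ≥ 1 and 0 < c ≤ 1. Let A be the set of points x of the rescaled integer lattice (c·d^(−1/2))·ℤᵈ ⊆ ℝᵈ whose Euclidean distance to the unit sphere is at most c/2, i.e., |‖x‖ − 1| ≤ c/2. Then A is finite and its cardinality is at most 2ᵈ · ω_d · d^(d/2) · c^(1−d), where ω_d denotes the Lebesgue volume of the unit ball in ℝᵈ. -/
/-!
The open axis-parallel cubes of side `s = c / √d` centred at the points of `A` are pairwise
disjoint, since distinct lattice points differ by at least `s` in some coordinate. Each has volume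
`s ^ d` and Euclidean radius `√d * s / 2 = c / 2`, so it lies in the shell `1 - c ≤ ‖y‖ ≤ 1 + c`,
of volume `((1 + c) ^ d - (1 - c) ^ d) ω_d ≤ 2 ^ d c ω_d`. Comparing volumes bounds the size of
every finite subset of `A`, which also shows that `A` is finite.
-/

open MeasureTheory Metric ENNReal

section Packing

variable {α ι : Type*} [MeasurableSpace α] (μ : Measure α) {Q : ι → Set α} {S : Set α}
  {v : ℝ≥0∞}

theorem Finset.card_mul_le_measure_of_pairwiseDisjoint {T : Finset ι}
    (hdisj : (T : Set ι).PairwiseDisjoint Q) (hmeas : ∀ i ∈ T, MeasurableSet (Q i))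
    (hv : ∀ i ∈ T, v ≤ μ (Q i)) (hS : ∀ i ∈ T, Q i ⊆ S) : T.card * v ≤ μ S :=
  calc (T.card : ℝ≥0∞) * v = ∑ _i ∈ T, v := by rw [Finset.sum_const, nsmul_eq_mul]
    _ ≤ ∑ i ∈ T, μ (Q i) := Finset.sum_le_sum hv
    _ = μ (⋃ i ∈ T, Q i) := (measure_biUnion_finset hdisj hmeas).symm
    _ ≤ μ S := measure_mono (Set.iUnion₂_subset hS)

theorem Set.finite_and_ncard_mul_le_of_pairwiseDisjoint {A : Set ι}
    (hdisj : A.PairwiseDisjoint Q) (hmeas : ∀ i ∈ A, MeasurableSet (Q i))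
    (hv : ∀ i ∈ A, v ≤ μ (Q i)) (hS : ∀ i ∈ A, Q i ⊆ S) (hv0 : v ≠ 0) (hSfin : μ S ≠ ∞) :
    A.Finite ∧ A.ncard * v ≤ μ S := by
  have hfinset (T : Finset ι) (hT : ↑T ⊆ A) : T.card * v ≤ μ S :=
    Finset.card_mul_le_measure_of_pairwiseDisjoint μ (hdisj.subset hT)
      (fun i hi ↦ hmeas i (hT hi)) (fun i hi ↦ hv i (hT hi)) (fun i hi ↦ hS i (hT hi))
  have hfin : A.Finite := by
    by_contra hinf
    obtain ⟨n, hn⟩ := ENNReal.exists_nat_mul_gt hv0 hSfin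
    obtain ⟨T, hTA, rfl⟩ := Set.Infinite.exists_subset_card_eq hinf n
    exact (hfinset T hTA).not_gt hn
  refine ⟨hfin, ?_⟩
  rw [Set.ncard_eq_toFinset_card A hfin]
  exact hfinset _ hfin.coe_toFinset.subset

end Packing

theorem addHaar_closedBall_diff_ball {E : Type*} [NormedAddCommGroup E] [NormedSpace ℝ E]
    [MeasurableSpace E] [BorelSpace E] [FiniteDimensional ℝ E] [Nontrivial E] (μ : Measure E)
    [μ.IsAddHaarMeasure] (x : E) {r R : ℝ} (hr : 0 ≤ r) (hrR : r ≤ R) :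
    μ (closedBall x R \ ball x r) =
      ENNReal.ofReal (R ^ Module.finrank ℝ E - r ^ Module.finrank ℝ E) * μ (ball 0 1) := by
  rw [measure_sdiff (ball_subset_closedBall.trans (closedBall_subset_closedBall hrR))
      measurableSet_ball.nullMeasurableSet measure_ball_lt_top.ne,
    Measure.addHaar_closedBall μ x (hr.trans hrR), Measure.addHaar_ball μ x hr,
    ← ENNReal.sub_mul fun _ _ ↦ measure_ball_lt_top.ne, ← ENNReal.ofReal_sub _ (by positivity)]

theorem mem_closedBall_diff_ball_of_dist_le {E : Type*} [SeminormedAddCommGroup E] {x y : E}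
    {R δ ε : ℝ} (hx : |‖x‖ - R| ≤ δ) (hy : dist y x ≤ ε) :
    y ∈ closedBall 0 (R + (δ + ε)) \ ball 0 (R - (δ + ε)) := by
  have hxy := abs_norm_sub_norm_le y x
  rw [← dist_eq_norm] at hxy
  rw [Set.mem_sdiff, mem_closedBall_zero_iff, mem_ball_zero_iff, not_lt]
  constructor <;> linarith [abs_le.mp hx, abs_le.mp hxy]

theorem one_add_pow_sub_one_sub_pow_le {c : ℝ} (hc0 : 0 ≤ c) (hc1 : c ≤ 1) {n : ℕ}
    (hn : 1 ≤ n) : (1 + c) ^ n - (1 - c) ^ n ≤ 2 ^ n * c := by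
  induction n, hn using Nat.le_induction with
  | base => linarith
  | succ n hn ih =>
    have hsum : (1 + c) ^ n + (1 - c) ^ n ≤ 2 ^ n := by
      have := pow_add_pow_le (x := 1 + c) (y := 1 - c) (n := n) (by linarith) (by linarith)
        (by omega)
      rwa [add_add_sub_cancel, one_add_one_eq_two] at this
    calc (1 + c) ^ (n + 1) - (1 - c) ^ (n + 1)
        = ((1 + c) ^ n - (1 - c) ^ n) + c * ((1 + c) ^ n + (1 - c) ^ n) := by ring
      _ ≤ 2 ^ n * c + c * 2 ^ n := by gcongr
      _ = 2 ^ (n + 1) * c := by ring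

theorem addHaar_closedBall_one_add_diff_ball_one_sub_le {E : Type*} [NormedAddCommGroup E]
    [NormedSpace ℝ E] [MeasurableSpace E] [BorelSpace E] [FiniteDimensional ℝ E] [Nontrivial E]
    (μ : Measure E) [μ.IsAddHaarMeasure] (x : E) {c : ℝ} (hc0 : 0 ≤ c) (hc1 : c ≤ 1) :
    μ (closedBall x (1 + c) \ ball x (1 - c)) ≤
      ENNReal.ofReal (2 ^ Module.finrank ℝ E * c) * μ (ball 0 1) := by
  rw [addHaar_closedBall_diff_ball μ x (by linarith) (by linarith)]
  gcongr
  exact one_add_pow_sub_one_sub_pow_le hc0 hc1 Module.finrank_pos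

namespace EuclideanSpace

variable {ι : Type*} [Fintype ι]

/-- `ι → ℝ` carries the sup norm, so this is the open cube of side `s` centred at `x`. -/
def cube (x : EuclideanSpace ℝ ι) (s : ℝ) : Set (EuclideanSpace ℝ ι) :=
  WithLp.ofLp ⁻¹' ball (WithLp.ofLp x) (s / 2)

theorem measurableSet_cube (x : EuclideanSpace ℝ ι) (s : ℝ) : MeasurableSet (cube x s) :=
  measurableSet_ball.preimage (WithLp.measurable_ofLp _ _)

theorem volume_cube (x : EuclideanSpace ℝ ι) {s : ℝ} (hs : 0 < s) :
    volume (cube x s) = ENNReal.ofReal (s ^ Fintype.card ι) := by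
  rw [cube, (PiLp.volume_preserving_ofLp ι).measure_preimage
      measurableSet_ball.nullMeasurableSet, Real.volume_pi_ball _ (half_pos hs),
    mul_div_cancel₀ s two_ne_zero]

theorem dist_le_of_mem_cube {x y : EuclideanSpace ℝ ι} {s : ℝ} (hy : y ∈ cube x s) :
    dist y x ≤ √(Fintype.card ι) * (s / 2) := by
  calc dist y x ≤ (Fintype.card ι : ℝ) ^ (1 / 2 : ℝ) * dist (WithLp.ofLp y) (WithLp.ofLp x) := by
        simpa using (PiLp.antilipschitzWith_ofLp 2 fun _ : ι ↦ ℝ).le_mul_dist y x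
    _ ≤ √(Fintype.card ι) * (s / 2) := by
      rw [← Real.sqrt_eq_rpow]
      exact mul_le_mul_of_nonneg_left (mem_ball.mp hy).le (Real.sqrt_nonneg _)

theorem disjoint_cube {x y : EuclideanSpace ℝ ι} {s : ℝ}
    (h : s ≤ dist (WithLp.ofLp x) (WithLp.ofLp y)) : Disjoint (cube x s) (cube y s) :=
  (ball_disjoint_ball (by linarith)).preimage _

theorem le_dist_ofLp_of_forall_eq_mul_int {s : ℝ} (hs : 0 ≤ s) {x y : EuclideanSpace ℝ ι}
    (hx : ∀ i, ∃ k : ℤ, x i = s * k) (hy : ∀ i, ∃ k : ℤ, y i = s * k) (hxy : x ≠ y) :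
    s ≤ dist (WithLp.ofLp x) (WithLp.ofLp y) := by
  obtain ⟨i, hi⟩ : ∃ i, x i ≠ y i := by
    by_contra! h
    exact hxy (PiLp.ext h)
  obtain ⟨a, ha⟩ := hx i
  obtain ⟨b, hb⟩ := hy i
  have hab : a ≠ b := by rintro rfl; exact hi (ha.trans hb.symm)
  calc s ≤ s * dist a b := le_mul_of_one_le_right hs (Int.pairwise_one_le_dist hab)
    _ = dist (x i) (y i) := by
      rw [ha, hb, Real.dist_eq, ← mul_sub, abs_mul, abs_of_nonneg hs, ← Int.dist_cast_real,
        Real.dist_eq]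
    _ ≤ dist (WithLp.ofLp x) (WithLp.ofLp y) := dist_le_pi_dist _ _ i

end EuclideanSpace

theorem le_rpow_of_mul_div_sqrt_pow_le {n a c : ℝ} (hc : 0 < c) {d : ℕ} (hd : d ≠ 0)
    (h : n * (c / √d) ^ d ≤ a * c) : n ≤ a * (d : ℝ) ^ ((d : ℝ) / 2) * c ^ (1 - (d : ℝ)) := by
  have hK : (c / √d) ^ d * ((d : ℝ) ^ ((d : ℝ) / 2) * c ^ (1 - (d : ℝ))) = c := by
    have hsqrt : √(d : ℝ) ≠ 0 := by positivity
    rw [Real.rpow_div_two_eq_sqrt _ d.cast_nonneg, Real.rpow_natCast, ← mul_assoc, ← mul_pow,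
      div_mul_cancel₀ c hsqrt, ← Real.rpow_natCast, ← Real.rpow_add hc, add_sub_cancel,
      Real.rpow_one]
  calc n = n * (c / √d) ^ d * ((d : ℝ) ^ ((d : ℝ) / 2) * c ^ (1 - (d : ℝ))) / c := by
        rw [mul_assoc, hK, mul_div_cancel_right₀ _ hc.ne']
    _ ≤ a * c * ((d : ℝ) ^ ((d : ℝ) / 2) * c ^ (1 - (d : ℝ))) / c := by gcongr
    _ = a * (d : ℝ) ^ ((d : ℝ) / 2) * c ^ (1 - (d : ℝ)) := by field_simp

/-- Counting estimate in the proof of the covering lemma (Lemma A.2): the set of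
points of the lattice `(c d^{-1/2}) ℤᵈ` at distance at most `c/2` from the unit
sphere is finite, of cardinality at most `2ᵈ ω_d d^{d/2} c^{1-d}`, where `ω_d` is
the volume of the unit ball. -/
theorem stmt_13 (d : ℕ) (hd : 1 ≤ d) (c : ℝ) (hc0 : 0 < c) (hc1 : c ≤ 1)
    (A : Set (EuclideanSpace ℝ (Fin d)))
    (hA : A = {x : EuclideanSpace ℝ (Fin d) |
      (∀ i : Fin d, ∃ k : ℤ, x i = c / Real.sqrt d * (k : ℝ)) ∧ |‖x‖ - 1| ≤ c / 2}) :
    A.Finite ∧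
      (A.ncard : ℝ) ≤ 2 ^ d *
        (volume (Metric.ball (0 : EuclideanSpace ℝ (Fin d)) 1)).toReal *
        (d : ℝ) ^ ((d : ℝ) / 2) * c ^ (1 - (d : ℝ)) := by
  have : NeZero d := ⟨by omega⟩
  set s := c / √d
  set ω := volume (ball (0 : EuclideanSpace ℝ (Fin d)) 1)
  have hs : 0 < s := by positivity
  have hmem (x : EuclideanSpace ℝ (Fin d)) (hx : x ∈ A) :
      (∀ i, ∃ k : ℤ, x i = s * k) ∧ |‖x‖ - 1| ≤ c / 2 := by
    rwa [hA] at hx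
  have hcube_shell (x : EuclideanSpace ℝ (Fin d)) (hx : |‖x‖ - 1| ≤ c / 2) :
      EuclideanSpace.cube x s ⊆ closedBall 0 (1 + c) \ ball 0 (1 - c) := fun y hy ↦ by
    have hyx : dist y x ≤ c / 2 := (EuclideanSpace.dist_le_of_mem_cube hy).trans_eq (by
      simp only [s, Fintype.card_fin]; field_simp)
    simpa only [add_halves] using mem_closedBall_diff_ball_of_dist_le hx hyx
  have hshell := addHaar_closedBall_one_add_diff_ball_one_sub_le volume
    (0 : EuclideanSpace ℝ (Fin d)) hc0.le hc1
  rw [finrank_euclideanSpace_fin] at hshell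
  have hshell_ne_top : ENNReal.ofReal (2 ^ d * c) * ω ≠ ∞ :=
    mul_ne_top ofReal_ne_top measure_ball_lt_top.ne
  obtain ⟨hfin, hcard⟩ := Set.finite_and_ncard_mul_le_of_pairwiseDisjoint volume
    (fun x hx y hy hxy ↦ EuclideanSpace.disjoint_cube <|
      EuclideanSpace.le_dist_ofLp_of_forall_eq_mul_int hs.le (hmem x hx).1 (hmem y hy).1 hxy)
    (fun x _ ↦ EuclideanSpace.measurableSet_cube x s)
    (fun x _ ↦ (EuclideanSpace.volume_cube x hs).ge) (fun x hx ↦ hcube_shell x (hmem x hx).2)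
    (by simp [hs]) (hshell.trans_lt hshell_ne_top.lt_top).ne
  refine ⟨hfin, le_rpow_of_mul_div_sqrt_pow_le hc0 (NeZero.ne d) ?_⟩
  have := ENNReal.toReal_mono hshell_ne_top (hcard.trans hshell)
  rwa [toReal_mul, toReal_mul, toReal_ofReal (by positivity), toReal_ofReal (by positivity),
    toReal_natCast, Fintype.card_fin, mul_right_comm _ c] at this
end
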